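/- For every context-free game G=(Σ,R,T) and every regular one-pass strategy σ_A given by a strategy automaton A, the winning set W(σ_A) is a regular language over Σ. -/

import Mathlib

namespace CFG

/-- Juliet's two kinds of moves. -/
inductive JMove : Type
  | call : JMove
  | read : JMove
deriving DecidableEq

/-- The extended alphabet Σ̂: `Sum.inl a` is the plain symbol `a`,
`Sum.inr a` is the "called" copy `â`. -/
abbrev HSym (A : Type) : Type := A ⊕ A

/-- The homomorphism ♮ deleting called symbols. -/
def flat {A : Type} (α : List (HSym A)) : List A :=
  α.filterMap (fun x => match x with | Sum.inl a => some a | Sum.inr _ => none)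

/-- A context-free game: a (minimal) DFA `T` over `A` with finite state set `Q`,
and a replacement relation `R` with nonempty replacement words and regular
replacement languages. -/
structure CFGame (A : Type) where
  Q : Type
  fintypeQ : Fintype Q
  T : DFA A Q
  minimal_reachable : ∀ q : Q, ∃ w : List A, T.evalFrom T.start w = q
  minimal_distinguishable :
    ∀ q q' : Q, (∀ w : List A, T.evalFrom q w ∈ T.accept ↔ T.evalFrom q' w ∈ T.accept) → q = q'
  R : A → List A → Prop
  R_ne : ∀ a v, R a v → v ≠ []
  R_regular : ∀ a, Language.IsRegular {v : List A | R a v}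

variable {A : Type}

/-- `a` is a function symbol (its replacement language is nonempty). -/
def CFGame.Fn (G : CFGame A) (a : A) : Prop := ∃ v, G.R a v

/-- One-pass strategies of Juliet (values at non-function symbols are irrelevant). -/
abbrev JStrat (A : Type) : Type := List (HSym A) → A → JMove

/-- Strategies of Romeo (values at non-function symbols are irrelevant). -/
abbrev RStrat (A : Type) : Type := List (HSym A) → A → List A

/-- Validity of a Romeo strategy: replacement words belong to the replacement language. -/
def CFGame.RValid (G : CFGame A) (τ : RStrat A) : Prop :=
  ∀ (α : List (HSym A)) (a : A), G.Fn a → G.R a (τ α a)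

/-- Configurations, instrumented for depth bookkeeping: a history string, the
remaining string where every symbol is annotated with its call-nesting level,
and the maximal nesting depth of the `Call` moves played so far. -/
abbrev Config (A : Type) : Type := List (HSym A) × List (A × ℕ) × ℕ

/-- One step of a play: Juliet reads or calls the current symbol according to `σ`
(a call is only possible at a function symbol); a call is answered by `τ`. -/
noncomputable def CFGame.step (G : CFGame A) (σ : JStrat A) (τ : RStrat A) :
    Config A → Config A :=
  fun c =>
    match c with
    | (α, [], d) => (α, [], d)
    | (α, (a, k) :: v, d) =>
      letI := Classical.propDecidable (G.Fn a ∧ σ α a = JMove.call)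
      if G.Fn a ∧ σ α a = JMove.call then
        (α ++ [Sum.inr a], (τ α a).map (fun b => (b, k + 1)) ++ v, max d (k + 1))
      else (α ++ [Sum.inl a], v, d)

/-- The play of `σ` against `τ` on input word `w`, as the sequence of its
configurations (the configuration stays fixed once the remaining string is empty). -/
noncomputable def CFGame.play (G : CFGame A) (σ : JStrat A) (τ : RStrat A)
    (w : List A) (n : ℕ) : Config A :=
  (G.step σ τ)^[n] ([], w.map (fun a => (a, 0)), 0)

/-- `σ` wins on `w`: against every (valid) Romeo strategy, the play on `w` is
finite and its final string belongs to the target language. -/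
def CFGame.WinsOn (G : CFGame A) (σ : JStrat A) (w : List A) : Prop :=
  ∀ τ : RStrat A, G.RValid τ →
    ∃ n : ℕ, (G.play σ τ w n).2.1 = [] ∧
      G.T.evalFrom G.T.start (flat (G.play σ τ w n).1) ∈ G.T.accept

/-- The winning set `W(σ)`. -/
def CFGame.W (G : CFGame A) (σ : JStrat A) : Set (List A) := {w | G.WinsOn σ w}

/-- `σ` is terminating: every play of `σ` is finite. -/
def CFGame.Terminating (G : CFGame A) (σ : JStrat A) : Prop :=
  ∀ τ : RStrat A, G.RValid τ → ∀ w : List A, ∃ n : ℕ, (G.play σ τ w n).2.1 = []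

/-- `σ` is dominant: it dominates every one-pass strategy. -/
def CFGame.Dominant (G : CFGame A) (σ : JStrat A) : Prop :=
  ∀ σ' : JStrat A, G.W σ' ⊆ G.W σ

/-- `σ` is undominated: no one-pass strategy strictly dominates it. -/
def CFGame.Undominated (G : CFGame A) (σ : JStrat A) : Prop :=
  ¬ ∃ σ' : JStrat A, G.W σ ⊂ G.W σ'

/-- `σ` is forgetful: its decisions only depend on `♮α` and the current symbol. -/
def CFGame.Forgetful (G : CFGame A) (σ : JStrat A) : Prop :=
  ∀ (α β : List (HSym A)) (a : A), G.Fn a → flat α = flat β → σ α a = σ β a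

/-- `σ` is regular: the language `{αa : σ(α,a) = Call}` over Σ̂ is regular. -/
def CFGame.RegularStrat (G : CFGame A) (σ : JStrat A) : Prop :=
  Language.IsRegular
    {x : List (HSym A) | ∃ (α : List (HSym A)) (a : A),
      G.Fn a ∧ σ α a = JMove.call ∧ x = α ++ [Sum.inl a]}

/-- One step of a strategy automaton of a strongly regular strategy, on the state
set `Q ∪ {Call}` (`none` is the absorbing state `Call`). -/
def optStep {Q : Type} (δA : Q → A → Option Q) (o : Option Q) (a : A) : Option Q :=
  o.bind (fun q => δA q a)

/-- `σ` is strongly regular: given by an automaton obtained from `T` by rerouting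
some transitions to a new accepting state `Call`; Juliet plays `Call` on `(α,a)`
iff the automaton maps `♮α·a` to `Call`. -/
def CFGame.StronglyRegular (G : CFGame A) (σ : JStrat A) : Prop :=
  ∃ δA : G.Q → A → Option G.Q,
    (∀ q a, δA q a = some (G.T.step q a) ∨ δA q a = none) ∧
    ∀ (α : List (HSym A)) (a : A), G.Fn a →
      (σ α a = JMove.call ↔
        List.foldl (optStep δA) (some G.T.start) (flat α ++ [a]) = none)

/-- Shortlex (strict) order on words. -/
def shortLex [LinearOrder A] (v w : List A) : Prop :=
  v.length < w.length ∨ (v.length = w.length ∧ List.Lex (· < ·) v w)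

/-- `V <_sl W` for sets of words: the shortlex-least word of the symmetric
difference belongs to `W`. -/
def slLT [LinearOrder A] (V W : Set (List A)) : Prop :=
  ∃ w : List A, w ∈ W ∧ w ∉ V ∧ ∀ v : List A, shortLex v w → (v ∈ V ↔ v ∈ W)

/-- `V ≤_sl W` for sets of words. -/
def slLE [LinearOrder A] (V W : Set (List A)) : Prop := V = W ∨ slLT V W

/-- `σ` is weakly dominant: `W(σ') ≤_sl W(σ)` for every one-pass strategy `σ'`. -/
def CFGame.WeaklyDominant [LinearOrder A] (G : CFGame A) (σ : JStrat A) : Prop :=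
  ∀ σ' : JStrat A, slLE (G.W σ') (G.W σ)

/-- The bounded depth property. -/
def CFGame.BoundedDepthProperty (G : CFGame A) : Prop :=
  ∃ B : ℕ → ℕ, ∀ σ : JStrat A, ∀ k : ℕ, ∃ σk : JStrat A,
    ∀ w ∈ G.W σ, w.length ≤ k →
      G.WinsOn σk w ∧
      ∀ τ : RStrat A, G.RValid τ → ∀ n : ℕ, (G.play σk τ w n).2.2 ≤ B w.length

/-- Prefix-freeness of all replacement languages. -/
def CFGame.PrefixFree (G : CFGame A) : Prop :=
  ∀ (a : A) (u v : List A), G.R a u → G.R a v → u <+: v → u = v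

/-- Non-recursiveness: no function symbol can be derived from itself. -/
def CFGame.NonRecursive (G : CFGame A) : Prop :=
  ¬ ∃ (n : ℕ) (f : ℕ → A), 1 ≤ n ∧ f 0 = f n ∧ (∀ i ≤ n, G.Fn (f i)) ∧
    ∀ k < n, ∃ v : List A, G.R (f k) v ∧ f (k + 1) ∈ v

/-- `σ` is almost undominated: only finitely many words are lost by `σ` but won
by some strategy dominating `σ`. -/
def CFGame.AlmostUndominated (G : CFGame A) (σ : JStrat A) : Prop :=
  Set.Finite {w : List A | ¬ G.WinsOn σ w ∧
    ∃ σ' : JStrat A, G.W σ ⊆ G.W σ' ∧ G.WinsOn σ' w}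

/-- Convergence of a sequence of one-pass strategies. -/
def Converges (G : CFGame A) (σs : ℕ → JStrat A) (σ : JStrat A) : Prop :=
  ∀ n : ℕ, ∃ k0 : ℕ, ∀ k ≥ k0, ∀ α : List (HSym A), α.length ≤ n →
    ∀ a : A, G.Fn a → σ α a = σs k α a

/-- The one-pass strategy defined by a DFA `M` over Σ̂ (a strategy automaton):
play `Call` on `(α,a)` iff `M` accepts `α·a`. -/
noncomputable def autoStrat {S : Type} (M : DFA (HSym A) S) : JStrat A :=
  fun α a =>
    letI := Classical.propDecidable (M.eval (α ++ [Sum.inl a]) ∈ M.accept)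
    if M.eval (α ++ [Sum.inl a]) ∈ M.accept then JMove.call else JMove.read

/-- `States(q; w, σ)`: the `T`-states `δ*(q, ♮α)` over final history strings `α`
of plays of `σ` on `w`. -/
def CFGame.StatesOf (G : CFGame A) (σ : JStrat A) (q : G.Q) (w : List A) : Set G.Q :=
  {q' | ∃ τ : RStrat A, G.RValid τ ∧ ∃ n : ℕ,
    (G.play σ τ w n).2.1 = [] ∧ G.T.evalFrom q (flat (G.play σ τ w n).1) = q'}

/-- `(p, a, S)` is an effect triple of `σ`. -/
def CFGame.IsEffectTriple (G : CFGame A) (σ : JStrat A) (t : G.Q × A × Set G.Q) : Prop :=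
  G.StatesOf σ t.1 [t.2.1] ⊆ t.2.2

/-- An effect triple is trivial if `δ(p,a) ∈ S`. -/
def CFGame.TrivialTriple (G : CFGame A) (t : G.Q × A × Set G.Q) : Prop :=
  G.T.step t.1 t.2.1 ∈ t.2.2

/-- The substrategy `σ^α`. -/
def subStrat (σ : JStrat A) (α : List (HSym A)) : JStrat A :=
  fun β a => σ (α ++ β) a

/-- The effect set `E(σ)`: all effect triples of all substrategies of `σ`. -/
def CFGame.EffectSet (G : CFGame A) (σ : JStrat A) : Set (G.Q × A × Set G.Q) :=
  {t | ∃ α : List (HSym A), G.IsEffectTriple (subStrat σ α) t}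

/-- The transition relation of the NFA `N_E` associated with a set `E` of effect
triples (state set `P(Q)`, initial state `{s}`, accepting states the subsets of `F`). -/
def CFGame.NEStep (G : CFGame A) (E : Set (G.Q × A × Set G.Q))
    (S : Set G.Q) (a : A) (S' : Set G.Q) : Prop :=
  ∀ p ∈ S, ∃ S'' : Set G.Q, S'' ⊆ S' ∧ (p, a, S'') ∈ E

/-- A strategy for the online word problem `OnlineNFA(N_E)`. -/
def CFGame.NEOnlineStrat (G : CFGame A) (E : Set (G.Q × A × Set G.Q))
    (ρ : List A → Set G.Q) : Prop :=
  ρ [] = {G.T.start} ∧ ∀ (w : List A) (a : A), G.NEStep E (ρ w) a (ρ (w ++ [a]))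

/-- The winning set of a strategy for `OnlineNFA(N_E)`. -/
def CFGame.NEWins (G : CFGame A) (ρ : List A → Set G.Q) : Set (List A) :=
  {w | ρ w ⊆ G.T.accept}

/-- A strategy automaton `M` is `(p,a,St)`-inducing. -/
def CFGame.Inducing (G : CFGame A) {S : Type} (M : DFA (HSym A) S)
    (p : G.Q) (a : A) (St : Set G.Q) : Prop :=
  G.Terminating (autoStrat M) ∧ G.Fn a ∧
  (∀ u : List A, G.R a u → G.StatesOf (autoStrat M) p u ⊆ St) ∧
  ∃ QA : G.Q → Set S,
    (∀ q ∈ St, ∀ q' ∈ St, q ≠ q' → Disjoint (QA q) (QA q')) ∧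
    ∀ u : List A, G.R a u → ∀ τ : RStrat A, G.RValid τ → ∀ n : ℕ,
      (G.play (autoStrat M) τ u n).2.1 = [] →
      ((∀ q ∈ St,
          (M.eval (G.play (autoStrat M) τ u n).1 ∈ QA q ↔
            G.T.evalFrom p (flat (G.play (autoStrat M) τ u n).1) = q)) ∧
        ∀ β : List (HSym A), β <+: (G.play (autoStrat M) τ u n).1 →
          β ≠ (G.play (autoStrat M) τ u n).1 → ∀ r ∈ St, M.eval β ∉ QA r)

/-
Fix a DFA `M` for the strategy automaton. Once the input `w` has been consumed, the rest of a
play on `w ++ z` only depends on the state of `M` after the history (which fixes all further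
decisions of Juliet) and on the state of `T` after its flattening. Hence whether `w ++ z` is won
depends on `w` only through two finite pieces of data: whether some play on `w` is infinite, and
the set of pairs (state of `M`, state of `T`) at the ends of the finite plays on `w`. Transferring
a win from `w` to `w'` with the same data needs Romeo's strategies to be spliced: follow one
strategy on `w`, then replay the continuation of the other. The Myhill–Nerode theorem concludes.
-/

theorem isRegular_of_leftQuotient_factors {α X : Type*} [Finite X] {L : Language α}
    (k : List α → X) (h : ∀ w w', k w = k w' → L.leftQuotient w = L.leftQuotient w') :
    L.IsRegular :=
  Language.IsRegular.of_finite_range_leftQuotient <|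
    (Set.finite_range fun x => L.leftQuotient (Function.invFun k x)).subset <| by
      rintro _ ⟨w, rfl⟩
      exact ⟨k w, h _ _ (Function.invFun_eq ⟨w, rfl⟩)⟩

lemma flat_append (α β : List (HSym A)) : flat (α ++ β) = flat α ++ flat β :=
  List.filterMap_append

section Plays

variable {G : CFGame A} {σ : JStrat A} {τ τ' : RStrat A}

lemma step_of_remaining_eq_nil {c : Config A} (h : c.2.1 = []) : G.step σ τ c = c := by
  obtain ⟨α, v, d⟩ := c
  obtain rfl : v = [] := h
  rfl

lemma step_call {α : List (HSym A)} {a : A} {k : ℕ} {v : List (A × ℕ)} {d : ℕ}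
    (h : G.Fn a ∧ σ α a = .call) :
    G.step σ τ (α, (a, k) :: v, d) =
      (α ++ [.inr a], (τ α a).map (fun b => (b, k + 1)) ++ v, max d (k + 1)) :=
  if_pos h

lemma step_read {α : List (HSym A)} {a : A} {k : ℕ} {v : List (A × ℕ)} {d : ℕ}
    (h : ¬ (G.Fn a ∧ σ α a = .call)) :
    G.step σ τ (α, (a, k) :: v, d) = (α ++ [.inl a], v, d) :=
  if_neg h

lemma exists_step_fst_eq_append {c : Config A} (h : c.2.1 ≠ []) :
    ∃ x, (G.step σ τ c).1 = c.1 ++ [x] := by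
  obtain ⟨α, _ | ⟨⟨a, k⟩, v⟩, d⟩ := c
  · exact absurd rfl h
  · by_cases hc : G.Fn a ∧ σ α a = .call
    · exact ⟨_, by rw [step_call hc]⟩
    · exact ⟨_, by rw [step_read hc]⟩

lemma step_congr_romeo {c : Config A} (h : ∀ a, τ' c.1 a = τ c.1 a) :
    G.step σ τ' c = G.step σ τ c := by
  obtain ⟨α, _ | ⟨⟨a, k⟩, v⟩, d⟩ := c
  · rfl
  · by_cases hc : G.Fn a ∧ σ α a = .call
    · rw [step_call hc, step_call hc, h]
    · rw [step_read hc, step_read hc]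

lemma step_append_remaining {c : Config A} (h : c.2.1 ≠ []) (u : List (A × ℕ)) :
    G.step σ τ (c.1, c.2.1 ++ u, c.2.2) =
      ((G.step σ τ c).1, (G.step σ τ c).2.1 ++ u, (G.step σ τ c).2.2) := by
  obtain ⟨α, _ | ⟨⟨a, k⟩, v⟩, d⟩ := c
  · exact absurd rfl h
  · by_cases hc : G.Fn a ∧ σ α a = .call
    · simp only [List.cons_append, step_call hc, List.append_assoc]
    · simp only [List.cons_append, step_read hc]

lemma play_succ (w : List A) (n : ℕ) :
    G.play σ τ w (n + 1) = G.step σ τ (G.play σ τ w n) :=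
  Function.iterate_succ_apply' _ _ _

lemma play_add (w : List A) (n m : ℕ) :
    G.play σ τ w (n + m) = (G.step σ τ)^[m] (G.play σ τ w n) := by
  rw [CFGame.play, Nat.add_comm, Function.iterate_add_apply]
  rfl

lemma play_add_of_remaining_eq_nil {w : List A} {n : ℕ} (h : (G.play σ τ w n).2.1 = [])
    (m : ℕ) : G.play σ τ w (n + m) = G.play σ τ w n := by
  induction m with
  | zero => rfl
  | succ m ih => rw [← Nat.add_assoc, play_succ, ih, step_of_remaining_eq_nil h]

lemma exists_first_end {w : List A} {n : ℕ} (h : (G.play σ τ w n).2.1 = []) :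
    ∃ n₀, G.play σ τ w n₀ = G.play σ τ w n ∧
      ∀ k < n₀, (G.play σ τ w k).2.1 ≠ [] := by
  classical
  have hex : ∃ k, (G.play σ τ w k).2.1 = [] := ⟨n, h⟩
  refine ⟨Nat.find hex, ?_, fun k hk => Nat.find_min hex hk⟩
  obtain ⟨m, hm⟩ := Nat.exists_eq_add_of_le (Nat.find_min' hex h)
  rw [hm, play_add_of_remaining_eq_nil (Nat.find_spec hex)]

lemma length_play_fst {w : List A} {n : ℕ} (h : ∀ k < n, (G.play σ τ w k).2.1 ≠ []) :
    (G.play σ τ w n).1.length = n := by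
  induction n with
  | zero => rfl
  | succ n ih =>
    obtain ⟨x, hx⟩ := exists_step_fst_eq_append (σ := σ) (τ := τ) (h n n.lt_succ_self)
    rw [play_succ, hx, List.length_append, ih fun k hk => h k (hk.trans n.lt_succ_self)]
    rfl

lemma play_congr_romeo {w : List A} {n : ℕ}
    (h : ∀ k < n, ∀ a, τ' (G.play σ τ w k).1 a = τ (G.play σ τ w k).1 a) :
    G.play σ τ' w n = G.play σ τ w n := by
  induction n with
  | zero => rfl
  | succ n ih =>
    rw [play_succ, play_succ, ih fun k hk => h k (hk.trans n.lt_succ_self),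
      step_congr_romeo (h n n.lt_succ_self)]

lemma play_append {w : List A} {n : ℕ} (h : ∀ k < n, (G.play σ τ w k).2.1 ≠ [])
    (z : List A) :
    G.play σ τ (w ++ z) n =
      ((G.play σ τ w n).1, (G.play σ τ w n).2.1 ++ z.map (fun a => (a, 0)),
        (G.play σ τ w n).2.2) := by
  induction n with
  | zero => simp [CFGame.play]
  | succ n ih =>
    rw [play_succ, play_succ, ih fun k hk => h k (hk.trans n.lt_succ_self),
      step_append_remaining (h n n.lt_succ_self)]

end Plays

section Shift

variable {G : CFGame A} {σ : JStrat A} {τ τ' : RStrat A} {α β : List (HSym A)}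

lemma step_shift (hσ : ∀ γ a, G.Fn a → (σ (α ++ γ) a = .call ↔ σ (β ++ γ) a = .call))
    (hτ : ∀ γ a, τ' (α ++ γ) a = τ (β ++ γ) a) (γ : List (HSym A)) (u : List (A × ℕ))
    (d d' : ℕ) :
    ∃ γ₁ u₁ e e', G.step σ τ' (α ++ γ, u, d) = (α ++ γ₁, u₁, e) ∧
      G.step σ τ (β ++ γ, u, d') = (β ++ γ₁, u₁, e') := by
  obtain _ | ⟨⟨a, k⟩, v⟩ := u
  · exact ⟨γ, [], d, d', rfl, rfl⟩
  by_cases hc : G.Fn a ∧ σ (α ++ γ) a = .call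
  · have hc' : G.Fn a ∧ σ (β ++ γ) a = .call := ⟨hc.1, (hσ γ a hc.1).mp hc.2⟩
    rw [step_call hc, step_call hc', hτ, List.append_assoc, List.append_assoc]
    exact ⟨_, _, _, _, rfl, rfl⟩
  · have hc' : ¬ (G.Fn a ∧ σ (β ++ γ) a = .call) := fun h' =>
      hc ⟨h'.1, (hσ γ a h'.1).mpr h'.2⟩
    rw [step_read hc, step_read hc', List.append_assoc, List.append_assoc]
    exact ⟨_, _, _, _, rfl, rfl⟩

lemma iterate_step_shift
    (hσ : ∀ γ a, G.Fn a → (σ (α ++ γ) a = .call ↔ σ (β ++ γ) a = .call))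
    (hτ : ∀ γ a, τ' (α ++ γ) a = τ (β ++ γ) a) (m : ℕ) (γ : List (HSym A))
    (u : List (A × ℕ)) (d d' : ℕ) :
    ∃ γ₁ u₁ e e', (G.step σ τ')^[m] (α ++ γ, u, d) = (α ++ γ₁, u₁, e) ∧
      (G.step σ τ)^[m] (β ++ γ, u, d') = (β ++ γ₁, u₁, e') := by
  induction m generalizing γ u d d' with
  | zero => exact ⟨γ, u, d, d', rfl, rfl⟩
  | succ m ih =>
    obtain ⟨γ₁, u₁, e, e', h, h'⟩ := step_shift hσ hτ γ u d d'
    rw [Function.iterate_succ_apply, Function.iterate_succ_apply, h, h']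
    exact ih γ₁ u₁ e e'

end Shift

open Classical in
noncomputable def spliceRomeo (τ₁ : RStrat A) (α β : List (HSym A)) (τ : RStrat A) :
    RStrat A :=
  fun δ a => if α <+: δ then τ (β ++ δ.drop α.length) a else τ₁ δ a

section Splice

variable {G : CFGame A} {σ : JStrat A} {τ τ₁ : RStrat A} {α β : List (HSym A)}

lemma CFGame.RValid.spliceRomeo (h₁ : G.RValid τ₁) (h : G.RValid τ) :
    G.RValid (spliceRomeo τ₁ α β τ) := by
  intro δ a ha
  unfold CFG.spliceRomeo
  split_ifs
  exacts [h _ _ ha, h₁ _ _ ha]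

lemma spliceRomeo_append (γ : List (HSym A)) (a : A) :
    spliceRomeo τ₁ α β τ (α ++ γ) a = τ (β ++ γ) a := by
  simp [spliceRomeo]

lemma play_spliceRomeo {w : List A} {n : ℕ} (hmin : ∀ k < n, (G.play σ τ₁ w k).2.1 ≠ [])
    {k : ℕ} (hk : k ≤ n) :
    G.play σ (spliceRomeo τ₁ (G.play σ τ₁ w n).1 β τ) w k = G.play σ τ₁ w k := by
  refine play_congr_romeo fun j hj a => ?_
  have hlen : (G.play σ τ₁ w j).1.length < (G.play σ τ₁ w n).1.length := by
    rw [length_play_fst hmin, length_play_fst fun i hi => hmin i (hi.trans (hj.trans_le hk))]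
    exact hj.trans_le hk
  have hnp : ¬ (G.play σ τ₁ w n).1 <+: (G.play σ τ₁ w j).1 := fun hp =>
    absurd hp.length_le (not_le.mpr hlen)
  simp [spliceRomeo, hnp]

end Splice

section FinalStates

variable (G : CFGame A) (σ : JStrat A)

def CFGame.HasInfinitePlay (w : List A) : Prop :=
  ∃ τ, G.RValid τ ∧ ∀ n, (G.play σ τ w n).2.1 ≠ []

def CFGame.finalStatePairs {S : Type} (M : DFA (HSym A) S) (w : List A) : Set (S × G.Q) :=
  {p | ∃ τ, G.RValid τ ∧ ∃ n, (G.play σ τ w n).2.1 = [] ∧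
    p = (M.eval (G.play σ τ w n).1, G.T.evalFrom G.T.start (flat (G.play σ τ w n).1))}

variable {G σ}

lemma play_append_of_first_end {τ : RStrat A} {w : List A} {n : ℕ}
    (hn : (G.play σ τ w n).2.1 = []) (hmin : ∀ k < n, (G.play σ τ w k).2.1 ≠ [])
    (z : List A) :
    G.play σ τ (w ++ z) n =
      ((G.play σ τ w n).1, z.map (fun a => (a, 0)), (G.play σ τ w n).2.2) := by
  rw [play_append hmin, hn, List.nil_append]

lemma not_hasInfinitePlay_of_winsOn_append {w z : List A} (h : G.WinsOn σ (w ++ z)) :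
    ¬ G.HasInfinitePlay σ w := by
  rintro ⟨τ, hτ, hinf⟩
  obtain ⟨n, hn, -⟩ := h τ hτ
  rw [play_append fun k _ => hinf k] at hn
  exact hinf n (List.append_eq_nil_iff.mp hn).1

lemma exists_first_end_of_not_hasInfinitePlay {w : List A} (h : ¬ G.HasInfinitePlay σ w)
    {τ : RStrat A} (hτ : G.RValid τ) :
    ∃ n, (G.play σ τ w n).2.1 = [] ∧ ∀ k < n, (G.play σ τ w k).2.1 ≠ [] := by
  obtain ⟨n, hn⟩ : ∃ n, (G.play σ τ w n).2.1 = [] := by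
    by_contra! hne
    exact h ⟨τ, hτ, hne⟩
  obtain ⟨n₀, heq, hmin⟩ := exists_first_end hn
  exact ⟨n₀, heq ▸ hn, hmin⟩

lemma call_iff_eval_mem_accept {S : Type} {M : DFA (HSym A) S}
    (hM : M.accepts = {x | ∃ α a, G.Fn a ∧ σ α a = .call ∧ x = α ++ [.inl a]})
    (δ : List (HSym A)) (a : A) (ha : G.Fn a) :
    σ δ a = .call ↔ M.eval (δ ++ [.inl a]) ∈ M.accept := by
  rw [← DFA.mem_accepts, hM]
  refine ⟨fun h => ⟨δ, a, ha, h, rfl⟩, ?_⟩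
  rintro ⟨α, b, -, hb, he⟩
  obtain ⟨rfl, hab⟩ := List.append_inj' he rfl
  obtain rfl : a = b := by simpa using hab
  exact hb

lemma call_iff_call_of_eval_eq {S : Type} {M : DFA (HSym A) S}
    (hσM : ∀ δ a, G.Fn a → (σ δ a = .call ↔ M.eval (δ ++ [.inl a]) ∈ M.accept))
    {α β : List (HSym A)} (h : M.eval α = M.eval β) (γ : List (HSym A)) (a : A) (ha : G.Fn a) :
    σ (α ++ γ) a = .call ↔ σ (β ++ γ) a = .call := by
  rw [hσM _ _ ha, hσM _ _ ha, List.append_assoc, List.append_assoc, DFA.eval,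
    DFA.evalFrom_of_append, ← DFA.eval, h, DFA.eval, ← DFA.evalFrom_of_append]

theorem winsOn_append_of_finalStatePairs_eq {S : Type} {M : DFA (HSym A) S}
    (hσM : ∀ δ a, G.Fn a → (σ δ a = .call ↔ M.eval (δ ++ [.inl a]) ∈ M.accept))
    {w w' : List A} (hinf : G.HasInfinitePlay σ w ↔ G.HasInfinitePlay σ w')
    (hfin : G.finalStatePairs σ M w = G.finalStatePairs σ M w') {z : List A}
    (hwin : G.WinsOn σ (w ++ z)) : G.WinsOn σ (w' ++ z) := by
  intro τ hτ
  obtain ⟨N, hN, hminN⟩ := exists_first_end_of_not_hasInfinitePlay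
    (hinf.not.mp (not_hasInfinitePlay_of_winsOn_append hwin)) hτ
  set β := (G.play σ τ w' N).1
  obtain ⟨τ₁, hτ₁, n₁, hn₁, hpair⟩ :
      (M.eval β, G.T.evalFrom G.T.start (flat β)) ∈ G.finalStatePairs σ M w :=
    hfin ▸ ⟨τ, hτ, N, hN, rfl⟩
  obtain ⟨n₁, heq₁, hmin₁⟩ := exists_first_end hn₁
  rw [← heq₁] at hn₁ hpair
  set α := (G.play σ τ₁ w n₁).1
  obtain ⟨hMeq, hTeq⟩ := Prod.mk.inj hpair
  -- Romeo plays like `τ₁` on `w`, then continues on `z` as `τ` does after `β`.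
  set τs := spliceRomeo τ₁ α β τ
  have hsplice : ∀ k ≤ n₁, G.play σ τs w k = G.play σ τ₁ w k :=
    fun _ => play_spliceRomeo hmin₁
  have hs := play_append_of_first_end (τ := τs) (by rwa [hsplice n₁ le_rfl])
    (fun k hk => by rw [hsplice k hk.le]; exact hmin₁ k hk) z
  rw [hsplice n₁ le_rfl] at hs
  have ht := play_append_of_first_end hN hminN z
  obtain ⟨n, hn, hacc⟩ := hwin τs (hτ₁.spliceRomeo hτ)
  obtain ⟨γ, u, e, e', h₁, h₂⟩ :=
    iterate_step_shift (call_iff_call_of_eval_eq hσM hMeq.symm) spliceRomeo_append n []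
      (z.map (fun a => (a, 0))) (G.play σ τ₁ w n₁).2.2 (G.play σ τ w' N).2.2
  simp only [List.append_nil] at h₁ h₂
  have hend : G.play σ τs (w ++ z) n = (α ++ γ, u, e) := by
    rw [← play_add_of_remaining_eq_nil hn n₁, Nat.add_comm, play_add, hs, h₁]
  rw [hend] at hn hacc
  refine ⟨N + n, ?_, ?_⟩ <;> rw [play_add, ht, h₂]
  · exact hn
  · rwa [flat_append, DFA.evalFrom_of_append, hTeq, ← DFA.evalFrom_of_append, ← flat_append]

end FinalStates

theorem statement18_general {A : Type} (G : CFGame A) (σ : JStrat A)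
    (h : G.RegularStrat σ) :
    Language.IsRegular {w : List A | G.WinsOn σ w} := by
  obtain ⟨S, _, M, hM⟩ := h
  have := G.fintypeQ
  have hσM := call_iff_eval_mem_accept hM
  refine isRegular_of_leftQuotient_factors
    (fun w => (G.HasInfinitePlay σ w, G.finalStatePairs σ M w)) fun w w' hk => ?_
  obtain ⟨hinf, hfin⟩ := Prod.mk.inj hk
  ext z
  exact ⟨winsOn_append_of_finalStatePairs_eq hσM (iff_of_eq hinf) hfin,
    winsOn_append_of_finalStatePairs_eq hσM (iff_of_eq hinf.symm) hfin.symm⟩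

theorem statement18 {A : Type} [Fintype A] (G : CFGame A) (σ : JStrat A)
    (h : G.RegularStrat σ) :
    Language.IsRegular {w : List A | G.WinsOn σ w} :=
  statement18_general G σ h

end CFG
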